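/- arXiv:1809.07390 — 2 statements merged into one kernel-verified Lean document; each statement's English description precedes it below -/
import Mathlib

section
/- Let s ≥ 1, let m ≥ 2 be even, let k = s + m, and let r be even. Let f be an s-plateaued Boolean function on 𝔽₂^k whose Walsh support is S_f = {(ϑ(v), v) : v ∈ 𝔽₂^m} for some map ϑ : 𝔽₂^m → 𝔽₂^s with ϑ(v) ≠ 0 for all v, and let f* : S_f → 𝔽₂ be its dual. Let h₁,…,h_s be Boolean functions on 𝔽₂^r such that for every δ in the image of ϑ the function δ·(h₁,…,h_s) is bent on 𝔽₂^r. Then 𝔣(x,y) = f(h₁(x),…,h_s(x), y) is a bent function on 𝔽₂^{r+m}, and its dual is given by 𝔣*(x,y) = f*(ϑ(y), y) ⊕ (ϑ(y)·(h₁,…,h_s))*(x), where (ϑ(y)·(h₁,…,h_s))* denotes the dual of the bent function ϑ(y)·(h₁,…,h_s). -/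
open Finset

def dotp {ι : Type*} [Fintype ι] (a b : ι → ZMod 2) : ZMod 2 := ∑ i, a i * b i

def WHT {ι : Type*} [Fintype ι] [DecidableEq ι]
    (f : (ι → ZMod 2) → ZMod 2) (ω : ι → ZMod 2) : ℤ :=
  ∑ x : ι → ZMod 2, (-1 : ℤ) ^ ((f x + dotp ω x).val)

def IsBent {ι : Type*} [Fintype ι] [DecidableEq ι] (f : (ι → ZMod 2) → ZMod 2) : Prop :=
  ∀ ω, |WHT f ω| = 2 ^ (Fintype.card ι / 2)

def IsDualBent {ι : Type*} [Fintype ι] [DecidableEq ι] (f g : (ι → ZMod 2) → ZMod 2) : Prop :=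
  ∀ ω, WHT f ω = 2 ^ (Fintype.card ι / 2) * (-1 : ℤ) ^ ((g ω).val)

def IsPlateaued {ι : Type*} [Fintype ι] [DecidableEq ι] (s : ℕ) (f : (ι → ZMod 2) → ZMod 2) : Prop :=
  ∀ ω, WHT f ω = 0 ∨ WHT f ω = 2 ^ ((Fintype.card ι + s) / 2) ∨
    WHT f ω = -(2 ^ ((Fintype.card ι + s) / 2))

def WSupport {ι : Type*} [Fintype ι] [DecidableEq ι] (f : (ι → ZMod 2) → ZMod 2) : Set (ι → ZMod 2) :=
  {ω | WHT f ω ≠ 0}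

def chi (a : ZMod 2) : ℤ := (-1) ^ a.val

lemma chi_add' : ∀ a b : ZMod 2, chi (a + b) = chi a * chi b := by decide

lemma chi_add (a b : ZMod 2) : chi (a + b) = chi a * chi b := chi_add' a b

lemma chi_sum {ι : Type*} (t : Finset ι) (g : ι → ZMod 2) :
    chi (∑ i ∈ t, g i) = ∏ i ∈ t, chi (g i) := by
  induction t using Finset.cons_induction with
  | empty => simp [chi]
  | cons a t ha ih => rw [Finset.sum_cons, Finset.prod_cons, chi_add, ih]

lemma sum_chi_single' : ∀ c : ZMod 2, ∑ w : ZMod 2, chi (w * c) = if c = 0 then 2 else 0 := by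
  decide

lemma sum_chi_single (c : ZMod 2) : ∑ w : ZMod 2, chi (w * c) = if c = 0 then 2 else 0 :=
  sum_chi_single' c

lemma sum_chi_dotp {ι : Type*} [Fintype ι] [DecidableEq ι] (a : ι → ZMod 2) :
    ∑ ω : ι → ZMod 2, chi (dotp ω a) = if a = 0 then 2 ^ Fintype.card ι else 0 := by
  have h1 : ∀ ω : ι → ZMod 2, chi (dotp ω a) = ∏ i, chi (ω i * a i) := fun ω => chi_sum _ _
  rw [Finset.sum_congr rfl fun ω _ => h1 ω, ← Fintype.piFinset_univ,
    ← Finset.prod_univ_sum (fun _ : ι => (Finset.univ : Finset (ZMod 2)))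
      (fun i w => chi (w * a i))]
  rw [Finset.prod_congr rfl fun i _ => sum_chi_single (a i)]
  by_cases hz : a = 0
  · subst hz; simp [Finset.prod_const, Finset.card_univ]
  · obtain ⟨i, hi⟩ : ∃ i, a i ≠ 0 := by
      by_contra hc; push_neg at hc; exact hz (funext hc)
    rw [if_neg hz]
    exact Finset.prod_eq_zero (Finset.mem_univ i) (by simp [hi])

lemma dotp_add_right {ι : Type*} [Fintype ι] (ω a b : ι → ZMod 2) :
    dotp ω (a + b) = dotp ω a + dotp ω b := by
  simp [dotp, mul_add, Finset.sum_add_distrib]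

lemma dotp_add_left {ι : Type*} [Fintype ι] (a b ω : ι → ZMod 2) :
    dotp (a + b) ω = dotp a ω + dotp b ω := by
  simp [dotp, add_mul, Finset.sum_add_distrib]

lemma dotp_comm {ι : Type*} [Fintype ι] (a b : ι → ZMod 2) : dotp a b = dotp b a := by
  simp [dotp, mul_comm]

lemma pi_add_eq_zero_iff {ι : Type*} (a b : ι → ZMod 2) : a + b = 0 ↔ a = b := by
  have z2 : ∀ x y : ZMod 2, x + y = 0 ↔ x = y := by decide
  simp [funext_iff, z2]

lemma wht_inversion {ι : Type*} [Fintype ι] [DecidableEq ι]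
    (g : (ι → ZMod 2) → ZMod 2) (z : ι → ZMod 2) :
    ∑ ω : ι → ZMod 2, WHT g ω * chi (dotp ω z) = 2 ^ Fintype.card ι * chi (g z) := by
  have h1 : ∀ ω, WHT g ω * chi (dotp ω z)
      = ∑ x : ι → ZMod 2, chi (g x) * chi (dotp ω (x + z)) := by
    intro ω
    rw [WHT, Finset.sum_mul]
    refine Finset.sum_congr rfl fun x _ => ?_
    show chi (g x + dotp ω x) * chi (dotp ω z) = _
    rw [chi_add, mul_assoc, ← chi_add, ← dotp_add_right]
  rw [Finset.sum_congr rfl fun ω _ => h1 ω, Finset.sum_comm]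
  have h2 : ∀ x : ι → ZMod 2, ∑ ω : ι → ZMod 2, chi (g x) * chi (dotp ω (x + z))
      = chi (g x) * (if x = z then 2 ^ Fintype.card ι else 0) := by
    intro x
    rw [← Finset.mul_sum, sum_chi_dotp]
    simp only [pi_add_eq_zero_iff]
  rw [Finset.sum_congr rfl fun x _ => h2 x]
  simp only [mul_ite, mul_zero]
  rw [Finset.sum_ite_eq' Finset.univ z]
  simp [mul_comm]

lemma dotp_sumElim {α β : Type*} [Fintype α] [Fintype β] [DecidableEq α] [DecidableEq β]
    (u x : α → ZMod 2) (v y : β → ZMod 2) :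
    dotp (Sum.elim u v) (Sum.elim x y) = dotp u x + dotp v y := by
  simp [dotp, Fintype.sum_sum_type]

lemma dotp_append {s m : ℕ} (a c : Fin s → ZMod 2) (b d : Fin m → ZMod 2) :
    dotp (Fin.append a b) (Fin.append c d) = dotp a c + dotp b d := by
  simp [dotp, Fin.sum_univ_add, Fin.append_left, Fin.append_right]

/-- if `f` is `s`-plateaued on `𝔽₂^(s+m)` with Walsh support
`{(ϑ(v),v) : v ∈ 𝔽₂^m}` (`ϑ(v) ≠ 0`), dual `f*`, and `δ·(h₁,…,h_s)` is bent on
`𝔽₂^r` with dual `(δ·(h₁,…,h_s))*` for every `δ` in the image of `ϑ`, then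
`𝔣(x,y) = f(h₁(x),…,h_s(x),y)` is bent on `𝔽₂^(r+m)` with dual
`𝔣*(x,y) = f*(ϑ(y),y) ⊕ (ϑ(y)·(h₁,…,h_s))*(x)`. -/
theorem stmt4 {s m r : ℕ} (hs : 1 ≤ s) (hm : 2 ≤ m) (hme : Even m) (hre : Even r)
    (f : (Fin (s + m) → ZMod 2) → ZMod 2)
    (hf : IsPlateaued s f)
    (ϑ : (Fin m → ZMod 2) → (Fin s → ZMod 2))
    (hϑ : ∀ v, ϑ v ≠ 0)
    (hsupp : WSupport f = {w : Fin (s + m) → ZMod 2 | ∃ v, w = Fin.append (ϑ v) v})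
    (fdual : (Fin (s + m) → ZMod 2) → ZMod 2)
    (hfdual : ∀ w, WHT f w ≠ 0 →
      WHT f w = 2 ^ ((s + m + s) / 2) * (-1 : ℤ) ^ ((fdual w).val))
    (h : Fin s → (Fin r → ZMod 2) → ZMod 2)
    (hdual : (Fin s → ZMod 2) → (Fin r → ZMod 2) → ZMod 2)
    (hbent : ∀ v : Fin m → ZMod 2,
      IsDualBent (fun x => dotp (ϑ v) (fun i => h i x)) (hdual (ϑ v)))
    (F : ((Fin r ⊕ Fin m) → ZMod 2) → ZMod 2)
    (hF : ∀ x, F x = f (Fin.append (fun i => h i (x ∘ Sum.inl)) (x ∘ Sum.inr))) :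
    IsBent F ∧
      ∀ (u : Fin r → ZMod 2) (v : Fin m → ZMod 2),
        WHT F (Sum.elim u v) =
          2 ^ ((r + m) / 2) *
            (-1 : ℤ) ^ ((fdual (Fin.append (ϑ v) v) + hdual (ϑ v) u).val) := by
  -- notation
  set A : (Fin m → ZMod 2) → (Fin (s + m) → ZMod 2) := fun t => Fin.append (ϑ t) t with hA
  have hAinj : Function.Injective A := by
    intro t t' hE
    funext i
    have := congrFun hE (Fin.natAdd s i)
    simpa [hA, Fin.append_right] using this
  have hnz : ∀ t, WHT f (A t) ≠ 0 := by
    intro t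
    have : A t ∈ WSupport f := by rw [hsupp]; exact ⟨t, rfl⟩
    exact this
  have hfd : ∀ t, WHT f (A t) = 2 ^ ((s + m + s) / 2) * chi (fdual (A t)) :=
    fun t => hfdual _ (hnz t)
  have key : ∀ (u : Fin r → ZMod 2) (v : Fin m → ZMod 2),
      WHT F (Sum.elim u v) =
        2 ^ ((r + m) / 2) * chi (fdual (A v) + hdual (ϑ v) u) := by
    intro u v
    -- step 1: double sum form
    have step1 : WHT F (Sum.elim u v)
        = ∑ p : (Fin r → ZMod 2) × (Fin m → ZMod 2),
            chi (f (Fin.append (fun i => h i p.1) p.2)) *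
              (chi (dotp u p.1) * chi (dotp v p.2)) := by
      rw [WHT, ← Equiv.sum_comp (Equiv.sumArrowEquivProdArrow (Fin r) (Fin m) (ZMod 2)).symm]
      refine Finset.sum_congr rfl fun p _ => ?_
      show chi (F (Sum.elim p.1 p.2) + dotp (Sum.elim u v) (Sum.elim p.1 p.2)) = _
      rw [hF, dotp_sumElim, chi_add, chi_add, Sum.elim_comp_inl, Sum.elim_comp_inr]
    -- step 2: multiply by 2^(s+m)
    have inv : ∀ z : Fin (s + m) → ZMod 2,
        (2 : ℤ) ^ (s + m) * chi (f z) = ∑ ω : Fin (s + m) → ZMod 2, WHT f ω * chi (dotp ω z) := by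
      intro z
      rw [wht_inversion, Fintype.card_fin]
    have step2 : (2 : ℤ) ^ (s + m) * WHT F (Sum.elim u v)
        = ∑ ω : Fin (s + m) → ZMod 2, WHT f ω *
            ∑ p : (Fin r → ZMod 2) × (Fin m → ZMod 2),
              chi (dotp ω (Fin.append (fun i => h i p.1) p.2)) *
                (chi (dotp u p.1) * chi (dotp v p.2)) := by
      rw [step1, Finset.mul_sum]
      rw [Finset.sum_congr rfl fun p _ => by
        rw [← mul_assoc, inv (Fin.append (fun i => h i p.1) p.2), Finset.sum_mul]]
      rw [Finset.sum_comm]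
      refine Finset.sum_congr rfl fun ω _ => ?_
      rw [Finset.mul_sum]
      exact Finset.sum_congr rfl fun p _ => by ring
    -- step 3: restrict ω-sum to the support
    have step3 : (2 : ℤ) ^ (s + m) * WHT F (Sum.elim u v)
        = ∑ t : Fin m → ZMod 2, WHT f (A t) *
            ∑ p : (Fin r → ZMod 2) × (Fin m → ZMod 2),
              chi (dotp (A t) (Fin.append (fun i => h i p.1) p.2)) *
                (chi (dotp u p.1) * chi (dotp v p.2)) := by
      rw [step2]
      set G : (Fin (s + m) → ZMod 2) → ℤ := fun ω => WHT f ω *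
            ∑ p : (Fin r → ZMod 2) × (Fin m → ZMod 2),
              chi (dotp ω (Fin.append (fun i => h i p.1) p.2)) *
                (chi (dotp u p.1) * chi (dotp v p.2)) with hG
      have h1 : ∑ ω : Fin (s + m) → ZMod 2, G ω = ∑ ω ∈ Finset.univ.image A, G ω := by
        refine (Finset.sum_subset (Finset.subset_univ _) ?_).symm
        intro ω _ hω
        have hz : WHT f ω = 0 := by
          by_contra hc
          have hmem : ω ∈ WSupport f := hc
          rw [hsupp] at hmem
          obtain ⟨t, rfl⟩ := hmem
          exact hω (Finset.mem_image.2 ⟨t, Finset.mem_univ t, rfl⟩)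
        simp [hG, hz]
      rw [h1, Finset.sum_image (fun x _ y _ hxy => hAinj hxy)]
    -- step 4: factor the p-sum
    have step4 : ∀ t : Fin m → ZMod 2,
        (∑ p : (Fin r → ZMod 2) × (Fin m → ZMod 2),
            chi (dotp (A t) (Fin.append (fun i => h i p.1) p.2)) *
              (chi (dotp u p.1) * chi (dotp v p.2)))
        = (∑ x : Fin r → ZMod 2, chi (dotp (ϑ t) (fun i => h i x)) * chi (dotp u x)) *
            (∑ y : Fin m → ZMod 2, chi (dotp t y) * chi (dotp v y)) := by
      intro t
      rw [Fintype.sum_prod_type, Finset.sum_mul_sum]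
      refine Finset.sum_congr rfl fun x _ => Finset.sum_congr rfl fun y _ => ?_
      simp only [hA]
      rw [dotp_append, chi_add]
      ring
    -- step 5: the y-sum collapses
    have ysum : ∀ t : Fin m → ZMod 2,
        (∑ y : Fin m → ZMod 2, chi (dotp t y) * chi (dotp v y))
          = if t = v then (2 : ℤ) ^ m else 0 := by
      intro t
      have : ∀ y : Fin m → ZMod 2, chi (dotp t y) * chi (dotp v y) = chi (dotp y (t + v)) := by
        intro y
        rw [dotp_add_right, chi_add, dotp_comm y t, dotp_comm y v]
      rw [Finset.sum_congr rfl fun y _ => this y, sum_chi_dotp, Fintype.card_fin]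
      simp only [pi_add_eq_zero_iff]
    -- step 6: the x-sum is the bent WHT
    have xsum : (∑ x : Fin r → ZMod 2, chi (dotp (ϑ v) (fun i => h i x)) * chi (dotp u x))
        = 2 ^ (r / 2) * chi (hdual (ϑ v) u) := by
      have hb := hbent v u
      rw [WHT, Fintype.card_fin] at hb
      refine Eq.trans ?_ hb
      exact Finset.sum_congr rfl fun x _ => (chi_add _ _).symm
    -- combine
    have big : (2 : ℤ) ^ (s + m) * WHT F (Sum.elim u v)
        = (2 : ℤ) ^ (s + m) * (2 ^ ((r + m) / 2) * chi (fdual (A v) + hdual (ϑ v) u)) := by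
      rw [step3, Finset.sum_congr rfl fun t _ => by rw [step4 t, ysum t]]
      simp only [mul_ite, mul_zero]
      rw [Finset.sum_ite_eq' Finset.univ v]
      simp only [Finset.mem_univ, if_true]
      rw [hfd v, xsum, chi_add]
      obtain ⟨m', rfl⟩ := hme
      obtain ⟨r', rfl⟩ := hre
      have e1 : (s + (m' + m') + s) / 2 = s + m' := by omega
      have e2 : (r' + r') / 2 = r' := by omega
      have e3 : (r' + r' + (m' + m')) / 2 = r' + m' := by omega
      rw [e1, e2, e3]
      rw [show (2:ℤ) ^ (s + m') * chi (fdual (A v)) * (2 ^ r' * chi (hdual (ϑ v) u) * 2 ^ (m' + m'))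
          = (2 ^ (s + m') * 2 ^ r' * 2 ^ (m' + m')) * (chi (fdual (A v)) * chi (hdual (ϑ v) u))
          from by ring]
      rw [show (2:ℤ) ^ (s + (m' + m')) * (2 ^ (r' + m') * (chi (fdual (A v)) * chi (hdual (ϑ v) u)))
          = (2 ^ (s + (m' + m')) * 2 ^ (r' + m')) * (chi (fdual (A v)) * chi (hdual (ϑ v) u))
          from by ring]
      congr 1
      rw [← pow_add, ← pow_add, ← pow_add]
      congr 1
      omega
    exact mul_left_cancel₀ (pow_ne_zero (s + m) two_ne_zero) big
  constructor
  · intro ω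
    have hω : ω = Sum.elim (ω ∘ Sum.inl) (ω ∘ Sum.inr) := by
      funext z; cases z <;> rfl
    rw [hω, key]
    have : Fintype.card (Fin r ⊕ Fin m) = r + m := by
      simp [Fintype.card_sum]
    rw [this, abs_mul]
    simp [chi, abs_pow]
  · intro u v
    exact key u v
end

section
/- Let r be even and let a, b be bent functions on 𝔽₂^r. Then the function 𝔣 : 𝔽₂^r × 𝔽₂^4 → 𝔽₂ defined by 𝔣(x, y₁, y₂, y₃, y₄) = b(x) ⊕ (a(x) ⊕ b(x))y₁y₂ ⊕ y₁y₃ ⊕ y₂y₄ is a bent function on 𝔽₂^{r+4}. -/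
open Finset

noncomputable def χ (c : ZMod 2) : ℤ := (-1) ^ c.val

lemma χ_add (c d : ZMod 2) : χ (c + d) = χ c * χ d := by revert c d; decide

lemma χ_abs (c : ZMod 2) : |χ c| = 1 := by revert c; decide

def e4 : (ZMod 2 × ZMod 2 × ZMod 2 × ZMod 2) ≃ (Fin 4 → ZMod 2) where
  toFun p := ![p.1, p.2.1, p.2.2.1, p.2.2.2]
  invFun v := (v 0, v 1, v 2, v 3)
  left_inv p := rfl
  right_inv v := by funext i; fin_cases i <;> rfl

lemma sum_zmod2 (g : ZMod 2 → ℤ) : ∑ c, g c = g 0 + g 1 := by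
  rw [show (univ : Finset (ZMod 2)) = {0, 1} from rfl, Finset.sum_pair (by decide)]

lemma WHT_eq {ι : Type*} [Fintype ι] [DecidableEq ι]
    (f : (ι → ZMod 2) → ZMod 2) (ω : ι → ZMod 2) :
    WHT f ω = ∑ x : ι → ZMod 2, χ (f x + dotp ω x) := rfl

lemma zmod2_cases (c : ZMod 2) : c = 0 ∨ c = 1 := by revert c; decide

lemma key (A B : ℤ) (n0 n1 n2 n3 : ZMod 2) :
    ∑ v : Fin 4 → ZMod 2,
      χ (v 0 * v 2 + v 1 * v 3 + (n0 * v 0 + n1 * v 1 + n2 * v 2 + n3 * v 3)) *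
        (if v 0 * v 1 = 1 then A else B)
    = 4 * χ (n0 * n2 + n1 * n3) * (if n2 * n3 = 1 then A else B) := by
  have h := Fintype.sum_equiv e4
    (fun p : ZMod 2 × ZMod 2 × ZMod 2 × ZMod 2 =>
      χ (p.1 * p.2.2.1 + p.2.1 * p.2.2.2 +
        (n0 * p.1 + n1 * p.2.1 + n2 * p.2.2.1 + n3 * p.2.2.2)) *
        (if p.1 * p.2.1 = 1 then A else B))
    (fun v : Fin 4 → ZMod 2 =>
      χ (v 0 * v 2 + v 1 * v 3 + (n0 * v 0 + n1 * v 1 + n2 * v 2 + n3 * v 3)) *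
        (if v 0 * v 1 = 1 then A else B)) (fun p => rfl)
  rw [← h]
  simp only [Fintype.sum_prod_type]
  rcases zmod2_cases n0 with h0 | h0 <;> rcases zmod2_cases n1 with h1 | h1 <;>
    rcases zmod2_cases n2 with h2 | h2 <;> rcases zmod2_cases n3 with h3 | h3 <;>
    subst h0 <;> subst h1 <;> subst h2 <;> subst h3 <;>
    simp only [sum_zmod2] <;>
    norm_num [χ, show ZMod.val (0 : ZMod 2) = 0 by decide,
      show ZMod.val (1 : ZMod 2) = 1 by decide, show ZMod.val (2 : ZMod 2) = 0 by decide,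
      show ZMod.val (3 : ZMod 2) = 1 by decide, show ZMod.val (4 : ZMod 2) = 0 by decide,
      show ZMod.val (5 : ZMod 2) = 1 by decide, show ZMod.val (6 : ZMod 2) = 0 by decide] <;>
    ring

/-- Generalized Rothaus B: if `a`, `b` are bent on `𝔽₂^r` (`r` even),
then `𝔣(x,y₁,…,y₄) = b(x) ⊕ (a(x)⊕b(x))y₁y₂ ⊕ y₁y₃ ⊕ y₂y₄` is bent
on `𝔽₂^(r+4)`. -/
theorem stmt7 {r : ℕ} (hre : Even r)
    (a b : (Fin r → ZMod 2) → ZMod 2)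
    (ha : IsBent a) (hb : IsBent b) :
    IsBent (fun x : (Fin r ⊕ Fin 4) → ZMod 2 =>
      b (x ∘ Sum.inl) +
      (a (x ∘ Sum.inl) + b (x ∘ Sum.inl)) * x (Sum.inr 0) * x (Sum.inr 1) +
      x (Sum.inr 0) * x (Sum.inr 2) + x (Sum.inr 1) * x (Sum.inr 3)) := by
  intro ω
  obtain ⟨k, hk⟩ := hre
  have hr2 : r / 2 = k := by omega
  have hr4 : (r + 4) / 2 = k + 2 := by omega
  set μ : Fin r → ZMod 2 := ω ∘ Sum.inl with hμ
  set ν : Fin 4 → ZMod 2 := ω ∘ Sum.inr with hν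
  set A := WHT a μ with hA
  set B := WHT b μ with hB
  have hdot : ∀ (u : Fin r → ZMod 2) (v : Fin 4 → ZMod 2),
      dotp ω (Sum.elim u v) = dotp μ u + dotp ν v := by
    intro u v
    simp [dotp, Fintype.sum_sum_type, hμ, hν]
  have hdν : ∀ v : Fin 4 → ZMod 2,
      dotp ν v = ν 0 * v 0 + ν 1 * v 1 + ν 2 * v 2 + ν 3 * v 3 := by
    intro v; simp [dotp, Fin.sum_univ_four]
  have hsum : WHT (fun x : (Fin r ⊕ Fin 4) → ZMod 2 =>
      b (x ∘ Sum.inl) +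
      (a (x ∘ Sum.inl) + b (x ∘ Sum.inl)) * x (Sum.inr 0) * x (Sum.inr 1) +
      x (Sum.inr 0) * x (Sum.inr 2) + x (Sum.inr 1) * x (Sum.inr 3)) ω
      = ∑ v : Fin 4 → ZMod 2,
          χ (v 0 * v 2 + v 1 * v 3 + (ν 0 * v 0 + ν 1 * v 1 + ν 2 * v 2 + ν 3 * v 3)) *
          (if v 0 * v 1 = 1 then A else B) := by
    rw [WHT_eq]
    rw [← Fintype.sum_equiv ((Equiv.sumArrowEquivProdArrow (Fin r) (Fin 4) (ZMod 2)).symm)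
      (fun p : (Fin r → ZMod 2) × (Fin 4 → ZMod 2) =>
        χ ((b (Sum.elim p.1 p.2 ∘ Sum.inl) +
          (a (Sum.elim p.1 p.2 ∘ Sum.inl) + b (Sum.elim p.1 p.2 ∘ Sum.inl)) *
            Sum.elim p.1 p.2 (Sum.inr 0) * Sum.elim p.1 p.2 (Sum.inr 1) +
          Sum.elim p.1 p.2 (Sum.inr 0) * Sum.elim p.1 p.2 (Sum.inr 2) +
          Sum.elim p.1 p.2 (Sum.inr 1) * Sum.elim p.1 p.2 (Sum.inr 3)) +
          dotp ω (Sum.elim p.1 p.2))) _ (fun p => rfl)]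
    have hterm : ∀ (u : Fin r → ZMod 2) (v : Fin 4 → ZMod 2),
        χ ((b (Sum.elim u v ∘ Sum.inl) +
          (a (Sum.elim u v ∘ Sum.inl) + b (Sum.elim u v ∘ Sum.inl)) *
            Sum.elim u v (Sum.inr 0) * Sum.elim u v (Sum.inr 1) +
          Sum.elim u v (Sum.inr 0) * Sum.elim u v (Sum.inr 2) +
          Sum.elim u v (Sum.inr 1) * Sum.elim u v (Sum.inr 3)) +
          dotp ω (Sum.elim u v))
        = χ (b u + (a u + b u) * (v 0 * v 1) + dotp μ u) *
          χ (v 0 * v 2 + v 1 * v 3 + (ν 0 * v 0 + ν 1 * v 1 + ν 2 * v 2 + ν 3 * v 3)) := by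
      intro u v
      have h1 : (Sum.elim u v ∘ Sum.inl) = u := rfl
      rw [h1, hdot u v, ← χ_add, ← hdν v]
      show χ _ = χ _
      congr 1
      simp only [Sum.elim_inr]
      ring
    calc ∑ p : (Fin r → ZMod 2) × (Fin 4 → ZMod 2), _
        = ∑ u : Fin r → ZMod 2, ∑ v : Fin 4 → ZMod 2,
            χ (b u + (a u + b u) * (v 0 * v 1) + dotp μ u) *
            χ (v 0 * v 2 + v 1 * v 3 + (ν 0 * v 0 + ν 1 * v 1 + ν 2 * v 2 + ν 3 * v 3)) := by
          rw [Fintype.sum_prod_type]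
          exact Finset.sum_congr rfl fun u _ => Finset.sum_congr rfl fun v _ => hterm u v
      _ = ∑ v : Fin 4 → ZMod 2,
            χ (v 0 * v 2 + v 1 * v 3 + (ν 0 * v 0 + ν 1 * v 1 + ν 2 * v 2 + ν 3 * v 3)) *
            (if v 0 * v 1 = 1 then A else B) := by
          rw [Finset.sum_comm]
          refine Finset.sum_congr rfl fun v _ => ?_
          rw [← Finset.sum_mul, mul_comm]
          congr 1
          rcases zmod2_cases (v 0 * v 1) with h | h <;> rw [h]
          · rw [if_neg (by decide), hB, WHT_eq]
            exact Finset.sum_congr rfl fun u _ => by rw [mul_zero, add_zero]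
          · rw [if_pos rfl, hA, WHT_eq]
            refine Finset.sum_congr rfl fun u _ => ?_
            congr 1
            have : ∀ x y : ZMod 2, y + (x + y) * 1 = x := by decide
            rw [this (a u) (b u)]
  rw [hsum, key A B (ν 0) (ν 1) (ν 2) (ν 3)]
  have hcard : Fintype.card (Fin r ⊕ Fin 4) = r + 4 := by simp
  rw [hcard, abs_mul, abs_mul, χ_abs, mul_one]
  have habsif : |if ν 2 * ν 3 = 1 then A else B| = 2 ^ k := by
    rcases zmod2_cases (ν 2 * ν 3) with h | h <;> rw [h]
    · have h' := hb μ; rw [Fintype.card_fin, hr2] at h'; rw [if_neg (by decide), hB]; exact h'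
    · have h' := ha μ; rw [Fintype.card_fin, hr2] at h'; rw [if_pos rfl, hA]; exact h'
  rw [habsif, show |(4 : ℤ)| = 4 by decide, hr4]
  ring
end
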